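/- Let λ ∈ σ_ap(A) be a finite approximate eigenvalue. Then the following are equivalent: (i) λ ∈ σ_{π+}(A); (ii) there exists a closed subspace H_λ ⊆ H of finite codimension such that every sequence (x_n) in H_λ ∩ dom A with ‖x_n‖ = 1 and (A−λ)x_n → 0 satisfies liminf_n [x_n,x_n] > 0; (iii) every sequence (x_n) in dom A converging weakly to 0 with ‖x_n‖ = 1 and (A−λ)x_n → 0 satisfies liminf_n [x_n,x_n] > 0. The analogous equivalences hold for λ ∈ σ_{π−}(A) with the conditions limsup_n [x_n,x_n] < 0. -/

import Mathlib

open Filter Topology OnePoint Set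

noncomputable section

namespace Paper

variable {H : Type*} [NormedAddCommGroup H] [InnerProductSpace ℂ H]

/-- The indefinite inner product `[x,y] := (Gx, y)` induced by the Gram operator `G`. -/
def brk (G : H →L[ℂ] H) (x y : H) : ℂ := inner ℂ (G x) y

/-- The real part of `[x,y]`; note that `[x,x]` is real when `G` is selfadjoint. -/
def brkRe (G : H →L[ℂ] H) (x y : H) : ℝ := (brk G x y).re

/-- A linear manifold of finite codimension in `H`. -/
def FinCodim (M : Submodule ℂ H) : Prop := FiniteDimensional ℂ (H ⧸ M)

/-- An approximate eigensequence of `A` at the finite point `l`. -/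
def IsApproxSeq (A : H →ₗ.[ℂ] H) (l : ℂ) (x : ℕ → A.domain) : Prop :=
  (∀ n, ‖(x n : H)‖ = 1) ∧
    Tendsto (fun n => A (x n) - l • ((x n : H))) atTop (𝓝 0)

/-- The approximate point spectrum of `A`. -/
def sigmaAp (A : H →ₗ.[ℂ] H) : Set ℂ := {l | ∃ x : ℕ → A.domain, IsApproxSeq A l x}

/-- The type `π₊` condition at `l` relative to the linear manifold `M`. -/
def PiPlusCond (G : H →L[ℂ] H) (A : H →ₗ.[ℂ] H) (l : ℂ) (M : Submodule ℂ H) : Prop :=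
  ∀ x : ℕ → A.domain, (∀ n, (x n : H) ∈ M) → IsApproxSeq A l x →
    0 < atTop.liminf (fun n => brkRe G (x n) (x n))

/-- The type `π₋` condition at `l` relative to the linear manifold `M`. -/
def PiMinusCond (G : H →L[ℂ] H) (A : H →ₗ.[ℂ] H) (l : ℂ) (M : Submodule ℂ H) : Prop :=
  ∀ x : ℕ → A.domain, (∀ n, (x n : H) ∈ M) → IsApproxSeq A l x →
    atTop.limsup (fun n => brkRe G (x n) (x n)) < 0

/-- `l` is a spectral point of type `π₊` of `A`. -/
def sigmaPiPlusAt (G : H →L[ℂ] H) (A : H →ₗ.[ℂ] H) (l : ℂ) : Prop :=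
  l ∈ sigmaAp A ∧ ∃ M : Submodule ℂ H, FinCodim M ∧ PiPlusCond G A l M

/-- `l` is a spectral point of type `π₋` of `A`. -/
def sigmaPiMinusAt (G : H →L[ℂ] H) (A : H →ₗ.[ℂ] H) (l : ℂ) : Prop :=
  l ∈ sigmaAp A ∧ ∃ M : Submodule ℂ H, FinCodim M ∧ PiMinusCond G A l M

/-- `l` is a spectral point of positive type of `A`. -/
def sigmaPPAt (G : H →L[ℂ] H) (A : H →ₗ.[ℂ] H) (l : ℂ) : Prop :=
  l ∈ sigmaAp A ∧ PiPlusCond G A l ⊤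

/-- `l` is a spectral point of negative type of `A`. -/
def sigmaMMAt (G : H →L[ℂ] H) (A : H →ₗ.[ℂ] H) (l : ℂ) : Prop :=
  l ∈ sigmaAp A ∧ PiMinusCond G A l ⊤

/-- An approximate eigensequence of `A` at `∞`. -/
def IsInftyApproxSeq (A : H →ₗ.[ℂ] H) (x : ℕ → A.domain) : Prop :=
  (∀ n, ‖A (x n)‖ = 1) ∧ Tendsto (fun n => ((x n : H))) atTop (𝓝 0)

/-- `A` is a bounded operator. -/
def IsBoundedOp (A : H →ₗ.[ℂ] H) : Prop := ∃ C : ℝ, ∀ x : A.domain, ‖A x‖ ≤ C * ‖(x : H)‖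

/-- The type `π₊` condition at `∞` relative to the linear manifold `M`. -/
def InftyPiPlusCond (G : H →L[ℂ] H) (A : H →ₗ.[ℂ] H) (M : Submodule ℂ H) : Prop :=
  ∀ x : ℕ → A.domain, (∀ n, (x n : H) ∈ M) → IsInftyApproxSeq A x →
    0 < atTop.liminf (fun n => brkRe G (A (x n)) (A (x n)))

/-- The type `π₋` condition at `∞` relative to the linear manifold `M`. -/
def InftyPiMinusCond (G : H →L[ℂ] H) (A : H →ₗ.[ℂ] H) (M : Submodule ℂ H) : Prop :=
  ∀ x : ℕ → A.domain, (∀ n, (x n : H) ∈ M) → IsInftyApproxSeq A x →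
    atTop.limsup (fun n => brkRe G (A (x n)) (A (x n))) < 0

/-- `∞` is a spectral point of type `π₊` of `A`. -/
def sigmaPiPlusInfty (G : H →L[ℂ] H) (A : H →ₗ.[ℂ] H) : Prop :=
  ¬ IsBoundedOp A ∧ ∃ M : Submodule ℂ H, FinCodim M ∧ InftyPiPlusCond G A M

/-- `∞` is a spectral point of type `π₋` of `A`. -/
def sigmaPiMinusInfty (G : H →L[ℂ] H) (A : H →ₗ.[ℂ] H) : Prop :=
  ¬ IsBoundedOp A ∧ ∃ M : Submodule ℂ H, FinCodim M ∧ InftyPiMinusCond G A M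

/-- `∞` is a spectral point of positive type of `A`. -/
def sigmaPPInfty (G : H →L[ℂ] H) (A : H →ₗ.[ℂ] H) : Prop :=
  ¬ IsBoundedOp A ∧ InftyPiPlusCond G A ⊤

/-- `∞` is a spectral point of negative type of `A`. -/
def sigmaMMInfty (G : H →L[ℂ] H) (A : H →ₗ.[ℂ] H) : Prop :=
  ¬ IsBoundedOp A ∧ InftyPiMinusCond G A ⊤

/-- A subset of the Riemann sphere `ℂ̄ = ℂ ∪ {∞}` given by a condition at finite
points and a condition at `∞`. -/
def extSet (Pf : ℂ → Prop) (Pinf : Prop) : Set (OnePoint ℂ) :=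
  {p | (∃ l : ℂ, p = (l : OnePoint ℂ) ∧ Pf l) ∨ (p = ∞ ∧ Pinf)}

/-- The extended approximate point spectrum `σ̃_ap(A) ⊆ ℂ̄`. -/
def extSigmaAp (A : H →ₗ.[ℂ] H) : Set (OnePoint ℂ) :=
  extSet (fun l => l ∈ sigmaAp A) (¬ IsBoundedOp A)

/-- The set `σ_{π+}(A) ⊆ ℂ̄`. -/
def extPiPlus (G : H →L[ℂ] H) (A : H →ₗ.[ℂ] H) : Set (OnePoint ℂ) :=
  extSet (sigmaPiPlusAt G A) (sigmaPiPlusInfty G A)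

/-- The set `σ_{π−}(A) ⊆ ℂ̄`. -/
def extPiMinus (G : H →L[ℂ] H) (A : H →ₗ.[ℂ] H) : Set (OnePoint ℂ) :=
  extSet (sigmaPiMinusAt G A) (sigmaPiMinusInfty G A)

/-- The set `σ_{++}(A) ⊆ ℂ̄`. -/
def extPP (G : H →L[ℂ] H) (A : H →ₗ.[ℂ] H) : Set (OnePoint ℂ) :=
  extSet (sigmaPPAt G A) (sigmaPPInfty G A)

/-- The set `σ_{−−}(A) ⊆ ℂ̄`. -/
def extMM (G : H →L[ℂ] H) (A : H →ₗ.[ℂ] H) : Set (OnePoint ℂ) :=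
  extSet (sigmaMMAt G A) (sigmaMMInfty G A)

/-- The extended set of points of regular type, `r̃(A) = ℂ̄ \ σ̃_ap(A)`. -/
def extReg (A : H →ₗ.[ℂ] H) : Set (OnePoint ℂ) := (extSigmaAp A)ᶜ

/-- `A` is `G`-symmetric: `[Ax,y] = [x,Ay]` for `x, y ∈ dom A`. -/
def GSymm (G : H →L[ℂ] H) (A : H →ₗ.[ℂ] H) : Prop :=
  ∀ x y : A.domain, brk G (A x) (y : H) = brk G (x : H) (A y)

/-- A bounded operator `T` is `G`-symmetric (equivalently, `G`-selfadjoint):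
`[Tx,y] = [x,Ty]` for all `x, y`. -/
def GSymmB (G T : H →L[ℂ] H) : Prop := ∀ x y : H, brk G (T x) y = brk G x (T y)

/-- `l ∈ ρ(A)`: the operator `A − l` maps `dom A` bijectively onto `H`
with a bounded inverse. -/
def InResolventSet (A : H →ₗ.[ℂ] H) (l : ℂ) : Prop :=
  (∀ y : H, ∃ x : A.domain, A x - l • (x : H) = y) ∧
  ∃ c : ℝ, 0 < c ∧ ∀ x : A.domain, c * ‖(x : H)‖ ≤ ‖A x - l • (x : H)‖

/-- The spectrum `σ(A) = ℂ \ ρ(A)`. -/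
def spectrumSet (A : H →ₗ.[ℂ] H) : Set ℂ := {l | ¬ InResolventSet A l}

/-- `ker (A − l)` as a submodule of `H`. -/
def kerAt (A : H →ₗ.[ℂ] H) (l : ℂ) : Submodule ℂ H where
  carrier := {x | ∃ hx : x ∈ A.domain, A ⟨x, hx⟩ = l • x}
  zero_mem' := ⟨A.domain.zero_mem, by
    have : (⟨(0 : H), A.domain.zero_mem⟩ : A.domain) = 0 := rfl
    rw [this, A.map_zero, smul_zero]⟩
  add_mem' := by
    rintro a b ⟨ha, ea⟩ ⟨hb, eb⟩
    refine ⟨A.domain.add_mem ha hb, ?_⟩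
    have : (⟨a + b, A.domain.add_mem ha hb⟩ : A.domain) = ⟨a, ha⟩ + ⟨b, hb⟩ := rfl
    rw [this, A.map_add, ea, eb, smul_add]
  smul_mem' := by
    rintro c x ⟨hx, ex⟩
    refine ⟨A.domain.smul_mem c hx, ?_⟩
    have : (⟨c • x, A.domain.smul_mem c hx⟩ : A.domain) = c • (⟨x, hx⟩ : A.domain) := rfl
    rw [this, A.map_smul, ex, smul_comm]

/-- The range of `A − l`. -/
def ranAt (A : H →ₗ.[ℂ] H) (l : ℂ) : Set H :=
  {y | ∃ x : A.domain, A x - l • (x : H) = y}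

/-- A uniformly positive subspace. -/
def IsUnifPos (G : H →L[ℂ] H) (L : Submodule ℂ H) : Prop :=
  ∃ δ : ℝ, 0 < δ ∧ ∀ x ∈ L, δ * ‖x‖ ^ 2 ≤ brkRe G x x

/-- A uniformly negative subspace. -/
def IsUnifNeg (G : H →L[ℂ] H) (L : Submodule ℂ H) : Prop :=
  ∃ δ : ℝ, 0 < δ ∧ ∀ x ∈ L, δ * ‖x‖ ^ 2 ≤ -brkRe G x x

/-- A positive set: every nonzero element `x` has `[x,x] > 0`. -/
def IsPosSet (G : H →L[ℂ] H) (S : Set H) : Prop := ∀ x ∈ S, x ≠ 0 → 0 < brkRe G x x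

/-- A negative set: every nonzero element `x` has `[x,x] < 0`. -/
def IsNegSet (G : H →L[ℂ] H) (S : Set H) : Prop := ∀ x ∈ S, x ≠ 0 → brkRe G x x < 0

/-- The orthogonal companion `L^{[⊥]}` of `L` with respect to `[·,·]`. -/
def orthCompanion (G : H →L[ℂ] H) (L : Submodule ℂ H) : Submodule ℂ H where
  carrier := {x | ∀ y ∈ L, brk G x y = 0}
  zero_mem' := by intro y hy; simp [brk]
  add_mem' := by
    intro a b ha hb y hy
    simp only [brk, map_add, inner_add_left] at *
    rw [ha y hy, hb y hy, add_zero]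
  smul_mem' := by
    intro c x hx y hy
    simp only [brk, _root_.map_smul, inner_smul_left] at *
    rw [hx y hy, mul_zero]

/-- The isotropic part `L° = L ∩ L^{[⊥]}` of `L`. -/
def isoPart (G : H →L[ℂ] H) (L : Submodule ℂ H) : Submodule ℂ H := L ⊓ orthCompanion G L

/-- A fundamental decomposition `L = L₊ [∔] L₋ [∔] L°` of `L`. -/
def IsFundDecomp (G : H →L[ℂ] H) (L Lp Lm L0 : Submodule ℂ H) : Prop :=
  Lp ≤ L ∧ Lm ≤ L ∧ L0 = isoPart G L ∧
  IsPosSet G (Lp : Set H) ∧ IsNegSet G (Lm : Set H) ∧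
  (∀ x ∈ Lp, ∀ y ∈ Lm, brk G x y = 0) ∧
  (∀ x ∈ L, ∃ p ∈ Lp, ∃ m ∈ Lm, ∃ z ∈ L0, x = p + m + z) ∧
  (∀ p ∈ Lp, ∀ m ∈ Lm, ∀ z ∈ L0, p + m + z = 0 → p = 0 ∧ m = 0 ∧ z = 0)

/-- A Jordan chain `x 0, …, x (n-1)` of `A` at `l` of length `n`. -/
def IsJordanChain (A : H →ₗ.[ℂ] H) (l : ℂ) (n : ℕ) (x : ℕ → A.domain) : Prop :=
  0 < n ∧ (∀ i < n, (x i : H) ≠ 0) ∧ A (x 0) = l • ((x 0 : H)) ∧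
  ∀ i, i + 1 < n → A (x (i + 1)) = l • ((x (i + 1) : H)) + (x i : H)

/-- A Jordan chain of `A` at `l` of infinite length. -/
def IsInfJordanChain (A : H →ₗ.[ℂ] H) (l : ℂ) (x : ℕ → A.domain) : Prop :=
  (∀ n, (x n : H) ≠ 0) ∧ A (x 0) = l • ((x 0 : H)) ∧
  ∀ n, A (x (n + 1)) = l • ((x (n + 1) : H)) + (x n : H)

/-- The algebraic eigenspace `L_λ(A) = ⋃ₙ ker (A − λ)ⁿ`. -/
def algEig (A : H →ₗ.[ℂ] H) (l : ℂ) : Set H :=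
  {x | ∃ n : ℕ, ∃ c : ℕ → H, c 0 = 0 ∧ c n = x ∧
    ∀ i < n, ∃ h : c (i + 1) ∈ A.domain, A ⟨c (i + 1), h⟩ = l • c (i + 1) + c i}

/-- The bounded operator `B` commutes with `A`, i.e. `BA ⊆ AB`. -/
def CommutesWith (B : H →L[ℂ] H) (A : H →ₗ.[ℂ] H) : Prop :=
  ∀ x : A.domain, ∃ h : B (x : H) ∈ A.domain, A ⟨B (x : H), h⟩ = B (A x)

/-- `R` is the (everywhere defined, bounded) resolvent of `A` at `μ`. -/
def IsResolventOf (A : H →ₗ.[ℂ] H) (mu : ℂ) (R : H →L[ℂ] H) : Prop :=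
  (∀ y : H, ∃ h : R y ∈ A.domain, A ⟨R y, h⟩ - mu • R y = y) ∧
  (∀ x : A.domain, R (A x - mu • (x : H)) = (x : H))

/-- The system `𝓜(I)` of all finite unions of bounded intervals whose closure
is contained in `I`. -/
def MSet (I : Set ℝ) : Set (Set ℝ) :=
  {D | ∃ F : Finset (Set ℝ),
    (∀ J ∈ F, J.OrdConnected ∧ Bornology.IsBounded J ∧ closure J ⊆ I) ∧ D = ⋃₀ ↑F}

/-- The system `𝓜_S(I)`: elements of `𝓜(I)` whose boundary does not meet `S`. -/
def MSetS (I : Set ℝ) (S : Set ℝ) : Set (Set ℝ) :=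
  {D | D ∈ MSet I ∧ frontier D ∩ S = ∅}

/-- `l` belongs to the resolvent set of the restriction `A|L` of `A`
to the (`A`-invariant) subspace `L`. -/
def InResolventRestr (A : H →ₗ.[ℂ] H) (L : Submodule ℂ H) (l : ℂ) : Prop :=
  (∀ x : A.domain, (x : H) ∈ L → A x - l • (x : H) ∈ L) ∧
  (∀ y ∈ L, ∃ x : A.domain, (x : H) ∈ L ∧ A x - l • (x : H) = y) ∧
  ∃ c : ℝ, 0 < c ∧ ∀ x : A.domain, (x : H) ∈ L → c * ‖(x : H)‖ ≤ ‖A x - l • (x : H)‖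

/-- The spectrum of the restriction `A|L`. -/
def specRestr (A : H →ₗ.[ℂ] H) (L : Submodule ℂ H) : Set ℂ :=
  {l | ¬ InResolventRestr A L l}

/-- The closure of `S ∩ dom A` with respect to the graph norm of `A`. -/
def graphClosure (A : H →ₗ.[ℂ] H) (S : Set H) : Set H :=
  {x | ∃ hx : x ∈ A.domain, ((x, A ⟨x, hx⟩) : H × H) ∈
    closure {p : H × H | ∃ hy : p.1 ∈ A.domain, p.1 ∈ S ∧ A ⟨p.1, hy⟩ = p.2}}

/-- The sum `A + F` of `A` and a bounded operator `F`, with domain `dom A`. -/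
def addCLM (A : H →ₗ.[ℂ] H) (F : H →L[ℂ] H) : H →ₗ.[ℂ] H :=
  ⟨A.domain, A.toFun + (F.toLinearMap.comp A.domain.subtype)⟩

/-- The composition `G ∘ A` as a partially defined operator with domain `dom A`. -/
def compCLM (G : H →L[ℂ] H) (A : H →ₗ.[ℂ] H) : H →ₗ.[ℂ] H :=
  ⟨A.domain, G.toLinearMap.comp A.toFun⟩

/-- A map `f` defined on `dom A` is `A`-compact: any sequence bounded in the graph
norm of `A` has a subsequence whose image under `f` converges. -/
def IsACompact (A : H →ₗ.[ℂ] H) (f : A.domain → H) : Prop :=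
  ∀ x : ℕ → A.domain, (∃ C : ℝ, ∀ n, ‖(x n : H)‖ + ‖A (x n)‖ ≤ C) →
    ∃ φ : ℕ → ℕ, StrictMono φ ∧ ∃ y : H, Tendsto (fun n => f (x (φ n))) atTop (𝓝 y)

/-- `(L, [·,·])` is a Hilbert space: `[·,·]` is positive definite on `L` and `L` is
complete with respect to the induced norm. -/
def IsHilbertWrt (G : H →L[ℂ] H) (L : Submodule ℂ H) : Prop :=
  IsPosSet G (L : Set H) ∧
  ∀ u : ℕ → H, (∀ n, u n ∈ L) →
    (∀ ε : ℝ, 0 < ε → ∃ N, ∀ m ≥ N, ∀ n ≥ N, brkRe G (u m - u n) (u m - u n) < ε) →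
    ∃ v ∈ L, Tendsto (fun n => brkRe G (u n - v) (u n - v)) atTop (𝓝 0)

/-- `(L, −[·,·])` is a Hilbert space. -/
def IsAntiHilbertWrt (G : H →L[ℂ] H) (L : Submodule ℂ H) : Prop :=
  IsNegSet G (L : Set H) ∧
  ∀ u : ℕ → H, (∀ n, u n ∈ L) →
    (∀ ε : ℝ, 0 < ε → ∃ N, ∀ m ≥ N, ∀ n ≥ N, -brkRe G (u m - u n) (u m - u n) < ε) →
    ∃ v ∈ L, Tendsto (fun n => brkRe G (u n - v) (u n - v)) atTop (𝓝 0)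


/-- The sequence `x` converges weakly to `0` in `H`. -/
def WeakNullSeq (x : ℕ → H) : Prop :=
  ∀ y : H, Tendsto (fun n => (inner ℂ y (x n) : ℂ)) atTop (𝓝 0)


local notation "⟪" x ", " y "⟫" => @inner ℂ _ _ x y

theorem real_liminf_neg (f : ℕ → ℝ) : atTop.liminf (fun n => -(f n)) = - atTop.limsup f := by
  rw [Filter.liminf_eq, Filter.limsup_eq, Real.sInf_def, neg_neg]
  congr 1
  ext a
  simp only [Set.mem_neg, Set.mem_setOf_eq, neg_le]
  constructor
  · intro h; filter_upwards [h] with n hn; linarith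
  · intro h; filter_upwards [h] with n hn; linarith

theorem abs_brkRe_le (G : H →L[ℂ] H) (x y : H) : |brkRe G x y| ≤ ‖G‖ * ‖x‖ * ‖y‖ := by
  calc |(⟪G x, y⟫).re| ≤ ‖⟪G x, y⟫‖ := Complex.abs_re_le_norm _
    _ ≤ ‖G x‖ * ‖y‖ := norm_inner_le_norm _ _
    _ ≤ ‖G‖ * ‖x‖ * ‖y‖ := by gcongr; exact G.le_opNorm x

/-- Boundedness of `brkRe` along a norm-one sequence. -/
theorem brkRe_bdd (G : H →L[ℂ] H) {A : H →ₗ.[ℂ] H} (x : ℕ → A.domain)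
    (hn : ∀ n, ‖(x n : H)‖ = 1) :
    ∀ n, |brkRe G (x n) (x n)| ≤ ‖G‖ := by
  intro n
  have := abs_brkRe_le G (x n : H) (x n : H)
  rwa [hn n, mul_one, mul_one] at this

theorem one_div_nat_tendsto : Tendsto (fun n : ℕ => 1 / ((n : ℝ) + 1)) atTop (𝓝 0) :=
  tendsto_one_div_add_atTop_nhds_zero_nat

/-- Direction (v) ⇒ (iv). -/
theorem dir3 [CompleteSpace H] (G : H →L[ℂ] H) (A : H →ₗ.[ℂ] H) (l : ℂ)
    (h5 : ∀ x : ℕ → A.domain, WeakNullSeq (fun n => (x n : H)) → IsApproxSeq A l x →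
        0 < atTop.liminf (fun n => brkRe G (x n) (x n))) :
    ∃ M : Submodule ℂ H, IsClosed (M : Set H) ∧ FinCodim M ∧ PiPlusCond G A l M := by
  by_contra hcon
  push_neg at hcon
  classical
  set P : ℕ × A.domain → Prop := fun p =>
    ‖(p.2 : H)‖ = 1 ∧ ‖A p.2 - l • (p.2 : H)‖ < 1 / (p.1 + 1) ∧
      brkRe G p.2 p.2 < 1 / (p.1 + 1) with hP
  set r : ℕ × A.domain → ℕ × A.domain → Prop := fun p q =>
    p.1 < q.1 ∧ ⟪(p.2 : H), (q.2 : H)⟫ = 0 with hr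
  have key : ∀ s : Finset (ℕ × A.domain), (∀ p ∈ s, P p) → ∃ y, P y ∧ ∀ p ∈ s, r p y := by
    intro s _
    set q : ℕ := (s.sup Prod.fst) + 1 with hq
    set K : Submodule ℂ H := Submodule.span ℂ ((fun p : ℕ × A.domain => (p.2 : H)) '' ↑s)
      with hK
    haveI hKfd : FiniteDimensional ℂ K :=
      FiniteDimensional.span_of_finite ℂ (s.finite_toSet.image _)
    have hcompl : IsCompl (Kᗮ) K := (Submodule.isCompl_orthogonal_of_hasOrthogonalProjection).symm
    have hMfc : FinCodim (Kᗮ) := by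
      have e := Submodule.quotientEquivOfIsCompl (Kᗮ) K hcompl
      exact Module.Finite.equiv e.symm
    have hMc : IsClosed ((Kᗮ : Submodule ℂ H) : Set H) := Submodule.isClosed_orthogonal K
    have hnc := hcon (Kᗮ) hMc hMfc
    rw [PiPlusCond] at hnc
    push_neg at hnc
    obtain ⟨x, hxmem, hxapp, hxlim⟩ := hnc
    have hbd : Filter.IsCoboundedUnder (· ≥ ·) atTop (fun n => brkRe G (x n) (x n)) := by
      apply Filter.IsBoundedUnder.isCoboundedUnder_ge
      exact Filter.isBoundedUnder_of ⟨‖G‖, fun n => (abs_le.mp (brkRe_bdd G x hxapp.1 n)).2⟩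
    have hfreq : ∃ᶠ n in atTop, brkRe G (x n) (x n) < 1 / (q + 1) :=
      frequently_lt_of_liminf_lt hbd (lt_of_le_of_lt hxlim (by positivity))
    have hev1 : ∀ᶠ n in atTop, ‖A (x n) - l • ((x n : H))‖ < 1 / (q + 1) := by
      have := hxapp.2.norm
      simp only [norm_zero] at this
      exact this.eventually_lt_const (by positivity)
    obtain ⟨n, h1, h2⟩ := (hfreq.and_eventually hev1).exists
    refine ⟨(q, x n), ⟨hxapp.1 n, h2, h1⟩, fun p hp => ?_⟩
    constructor
    · exact lt_of_le_of_lt (Finset.le_sup hp) (Nat.lt_succ_self _)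
    · have : (x n : H) ∈ Kᗮ := hxmem n
      exact (Submodule.mem_orthogonal K _).mp this _
        (Submodule.subset_span ⟨p, hp, rfl⟩)
  obtain ⟨f, hPf, hrf⟩ := exists_seq_of_forall_finset_exists P r key
  set z : ℕ → A.domain := fun n => (f n).2 with hz
  have hmono : StrictMono fun n => (f n).1 := fun m n h => (hrf m n h).1
  have hge : ∀ n, n ≤ (f n).1 := fun n => hmono.le_apply
  have hzn : ∀ n, ‖(z n : H)‖ = 1 := fun n => (hPf n).1
  have hfrac : ∀ n : ℕ, 1 / (((f n).1 : ℝ) + 1) ≤ 1 / ((n : ℝ) + 1) := by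
    intro n
    apply one_div_le_one_div_of_le (by positivity)
    have : (n : ℝ) ≤ ((f n).1 : ℝ) := Nat.cast_le.mpr (hge n)
    linarith
  have hza : ∀ n, ‖A (z n) - l • (z n : H)‖ ≤ 1 / ((n : ℝ) + 1) :=
    fun n => le_trans (hPf n).2.1.le (hfrac n)
  have hzb : ∀ n, brkRe G (z n) (z n) ≤ 1 / ((n : ℝ) + 1) :=
    fun n => le_trans (hPf n).2.2.le (hfrac n)
  have horth : Orthonormal ℂ fun n => (z n : H) := by
    rw [orthonormal_iff_ite]
    intro i j
    rcases lt_trichotomy i j with hij | hij | hij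
    · rw [if_neg hij.ne]; exact (hrf i j hij).2
    · subst hij; rw [if_pos rfl, inner_self_eq_norm_sq_to_K, hzn]; norm_num
    · rw [if_neg hij.ne']
      rw [← inner_conj_symm]
      rw [(hrf j i hij).2]
      simp
  have hzw : WeakNullSeq fun n => (z n : H) := by
    intro y
    rw [tendsto_zero_iff_norm_tendsto_zero]
    have hsum := horth.inner_products_summable (x := y)
    have h2 := hsum.tendsto_atTop_zero
    have h3 := h2.sqrt
    rw [Real.sqrt_zero] at h3
    have heq : (fun n => Real.sqrt (‖⟪(z n : H), y⟫‖ ^ 2)) = fun n => ‖⟪(z n : H), y⟫‖ :=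
      funext fun n => Real.sqrt_sq (norm_nonneg _)
    rw [heq] at h3
    simpa [norm_inner_symm (𝕜 := ℂ) y] using h3
  have hzapp : IsApproxSeq A l z := by
    refine ⟨hzn, ?_⟩
    rw [tendsto_zero_iff_norm_tendsto_zero]
    exact squeeze_zero (fun n => norm_nonneg _) hza one_div_nat_tendsto
  have hpos := h5 z hzw hzapp
  have hle : atTop.liminf (fun n => brkRe G (z n) (z n)) ≤
      atTop.liminf (fun n : ℕ => 1 / ((n : ℝ) + 1)) := by
    have hbdd : Filter.IsBoundedUnder (· ≥ ·) atTop (fun n => brkRe G (z n) (z n)) :=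
      Filter.isBoundedUnder_of ⟨-‖G‖, fun n => (abs_le.mp (brkRe_bdd G z hzn n)).1⟩
    have hcob : Filter.IsCoboundedUnder (· ≥ ·) atTop (fun n : ℕ => 1 / ((n : ℝ) + 1)) :=
      Filter.IsBoundedUnder.isCoboundedUnder_ge
        (Filter.isBoundedUnder_of ⟨1, fun n => by
          rw [div_le_one (by positivity)]; linarith [Nat.cast_nonneg (α := ℝ) n]⟩)
    exact Filter.liminf_le_liminf (Filter.Eventually.of_forall hzb) hbdd hcob
  rw [one_div_nat_tendsto.liminf_eq] at hle
  linarith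

/-- Block construction: a nearly-null combination of `K1` far-apart members of the
almost-orthogonal sequence `w` lying in `M`. -/
theorem block_step (G : H →L[ℂ] H)
    (hsym : ∀ p q : H, ⟪G p, q⟫ = ⟪p, G q⟫)
    (A : H →ₗ.[ℂ] H) (l : ℂ) (M : Submodule ℂ H) [FiniteDimensional ℂ (H ⧸ M)]
    (w : ℕ → A.domain)
    (W1 : ∀ n, ‖(w n : H)‖ = 1)
    (W2 : ∀ n, ‖A (w n) - l • ((w n : H))‖ ≤ 1 / ((n : ℝ) + 1))
    (W3 : ∀ n, brkRe G (w n) (w n) ≤ 1 / ((n : ℝ) + 1))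
    (W4 : ∀ m n, m < n → ‖⟪(w m : H), (w n : H)⟫‖ ≤ (1/2 : ℝ) ^ n ∧
      ‖⟪G ((w m : H)), ((w n : H))⟫‖ ≤ (1/2 : ℝ) ^ n)
    (j : ℕ) :
    ∃ u : A.domain, (u : H) ∈ M ∧
      1 - ((Module.finrank ℂ (H ⧸ M) + 1 : ℕ) : ℝ)^2 * (1/2)^j ≤ ‖(u : H)‖^2 ∧
      ‖A u - l • (u : H)‖ ≤ ((Module.finrank ℂ (H ⧸ M) + 1 : ℕ) : ℝ) * (1/((j:ℝ)+1)) ∧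
      brkRe G u u ≤ ((Module.finrank ℂ (H ⧸ M) + 1 : ℕ) : ℝ) * (1/((j:ℝ)+1)) +
        ((Module.finrank ℂ (H ⧸ M) + 1 : ℕ) : ℝ)^2 * (1/2)^j := by
  classical
  set k : ℕ := Module.finrank ℂ (H ⧸ M) with hk
  set K1 : ℕ := k + 1 with hK1
  set b : ℕ := j * K1 with hb
  have hjb : j ≤ b := Nat.le_mul_of_pos_right j (Nat.succ_pos k)
  set a : Fin K1 → H := fun i => ((w (b + i) : H)) with ha
  -- linear dependence in the quotient
  have hnli : ¬ LinearIndependent ℂ fun i : Fin K1 => Submodule.Quotient.mk (p := M) (a i) := by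
    intro hli
    have h1 := hli.fintype_card_le_finrank
    rw [Fintype.card_fin] at h1
    omega
  obtain ⟨g, hgsum, i₁, hgi₁⟩ := Fintype.not_linearIndependent_iff.mp hnli
  obtain ⟨i₀, -, hmax⟩ := Finset.exists_max_image (Finset.univ : Finset (Fin K1))
    (fun i => ‖g i‖) ⟨i₁, Finset.mem_univ _⟩
  have hgi₀ : g i₀ ≠ 0 := by
    intro h0
    apply hgi₁
    have h' := hmax i₁ (Finset.mem_univ _)
    rw [h0, norm_zero] at h'
    exact norm_le_zero_iff.mp h'
  set c : Fin K1 → ℂ := fun i => g i / g i₀ with hc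
  have hc₀ : c i₀ = 1 := div_self hgi₀
  have hcle : ∀ i, ‖c i‖ ≤ 1 := fun i => by
    rw [hc]
    simp only [norm_div]
    exact div_le_one_of_le₀ (hmax i (Finset.mem_univ _)) (norm_nonneg _)
  set u : A.domain := ∑ i : Fin K1, c i • w (b + i) with hu
  have hucoe : (u : H) = ∑ i : Fin K1, c i • a i := by
    rw [hu]
    push_cast
    rfl
  have haself : ∀ i, ⟪a i, a i⟫ = 1 := fun i => by
    rw [inner_self_eq_norm_sq_to_K]
    simp only [ha]
    rw [W1]
    norm_num
  have hpow : ∀ n : ℕ, b ≤ n → ((1:ℝ)/2)^n ≤ (1/2)^j := fun n hn =>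
    pow_le_pow_of_le_one (by norm_num) (by norm_num) (le_trans hjb hn)
  have hoff : ∀ i i' : Fin K1, i ≠ i' →
      ‖⟪a i, a i'⟫‖ ≤ (1/2:ℝ)^j ∧ ‖⟪G (a i), a i'⟫‖ ≤ (1/2:ℝ)^j := by
    intro i i' hne
    rcases Nat.lt_or_ge (i : ℕ) (i' : ℕ) with hlt | hge'
    · have h4 := W4 (b + i) (b + i') (by omega)
      exact ⟨h4.1.trans (hpow _ (by omega)), h4.2.trans (hpow _ (by omega))⟩
    · have hlt : (i' : ℕ) < (i : ℕ) :=
        lt_of_le_of_ne hge' fun h => hne (Fin.ext h.symm)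
      have h4 := W4 (b + i') (b + i) (by omega)
      constructor
      · calc ‖⟪a i, a i'⟫‖ = ‖⟪a i', a i⟫‖ := by rw [norm_inner_symm]
          _ ≤ (1/2:ℝ)^j := h4.1.trans (hpow _ (by omega))
      · calc ‖⟪G (a i), a i'⟫‖ = ‖⟪a i', G (a i)⟫‖ := by rw [norm_inner_symm]
          _ = ‖⟪G (a i'), a i⟫‖ := by rw [← hsym (a i') (a i)]
          _ ≤ (1/2:ℝ)^j := h4.2.trans (hpow _ (by omega))
  have hexp : ∀ z : Fin K1 → H, ⟪∑ i, c i • z i, ∑ i', c i' • a i'⟫ =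
      ∑ i, ∑ i', (starRingEnd ℂ) (c i) * (c i' * ⟪z i, a i'⟫) := by
    intro z
    rw [sum_inner]
    refine Finset.sum_congr rfl fun i _ => ?_
    rw [inner_smul_left, inner_sum, Finset.mul_sum]
    exact Finset.sum_congr rfl fun i' _ => by rw [inner_smul_right]
  have hreoff : ∀ (z : Fin K1 → H) (i i' : Fin K1), ‖⟪z i, a i'⟫‖ ≤ (1/2:ℝ)^j →
      |((starRingEnd ℂ) (c i) * (c i' * ⟪z i, a i'⟫)).re| ≤ (1/2:ℝ)^j := by
    intro z i i' hz
    calc |((starRingEnd ℂ) (c i) * (c i' * ⟪z i, a i'⟫)).re|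
        ≤ ‖(starRingEnd ℂ) (c i) * (c i' * ⟪z i, a i'⟫)‖ := Complex.abs_re_le_norm _
      _ = ‖c i‖ * (‖c i'‖ * ‖⟪z i, a i'⟫‖) := by
          rw [norm_mul, norm_mul, RCLike.norm_conj]
      _ ≤ 1 * (1 * ((1:ℝ)/2)^j) := by
          apply mul_le_mul (hcle i) _ (by positivity) zero_le_one
          exact mul_le_mul (hcle i') hz (norm_nonneg _) zero_le_one
      _ = ((1:ℝ)/2)^j := by ring
  refine ⟨u, ?_, ?_, ?_, ?_⟩
  · -- membership
    rw [← Submodule.Quotient.mk_eq_zero]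
    have h1 : (Submodule.Quotient.mk (p := M) ((u : H))) =
        ∑ i, c i • Submodule.Quotient.mk (p := M) (a i) := by
      rw [hucoe, ← Submodule.mkQ_apply, map_sum]
      exact Finset.sum_congr rfl fun i _ => by rw [_root_.map_smul, Submodule.mkQ_apply]
    have h2 : ∀ i : Fin K1, c i • Submodule.Quotient.mk (p := M) (a i) =
        (g i₀)⁻¹ • (g i • Submodule.Quotient.mk (p := M) (a i)) := by
      intro i
      rw [smul_smul, hc]
      congr 1
      field_simp
    rw [h1, Finset.sum_congr rfl fun i _ => h2 i, ← Finset.smul_sum, hgsum, smul_zero]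
  · -- norm lower bound
    have h1 : ‖(u : H)‖^2 = (⟪(u : H), (u : H)⟫).re := by rw [InnerProductSpace.norm_sq_eq_re_inner (𝕜 := ℂ)]; rfl
    have h2 : ⟪(u : H), (u : H)⟫ =
        ∑ i, ∑ i', (starRingEnd ℂ) (c i) * (c i' * ⟪a i, a i'⟫) := by
      rw [hucoe]; exact hexp a
    rw [h1, h2, Complex.re_sum]
    have hsplit : ∀ i : Fin K1,
        (∑ i', (starRingEnd ℂ) (c i) * (c i' * ⟪a i, a i'⟫)).re =
        ‖c i‖^2 + ∑ i' ∈ Finset.univ.erase i,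
          ((starRingEnd ℂ) (c i) * (c i' * ⟪a i, a i'⟫)).re := by
      intro i
      rw [Complex.re_sum, ← Finset.add_sum_erase _ _ (Finset.mem_univ i)]
      congr 1
      rw [haself i, mul_one, mul_comm, Complex.mul_conj]
      simp [Complex.normSq_eq_norm_sq, ← Complex.ofReal_pow]
    rw [Finset.sum_congr rfl fun i _ => hsplit i, Finset.sum_add_distrib]
    have hd : (1:ℝ) ≤ ∑ i : Fin K1, ‖c i‖^2 := by
      have h' := Finset.single_le_sum (f := fun i => ‖c i‖^2)
        (fun i _ => sq_nonneg _) (Finset.mem_univ i₀)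
      simp only [hc₀, norm_one, one_pow] at h'
      exact h'
    have ho : |∑ i : Fin K1, ∑ i' ∈ Finset.univ.erase i,
        ((starRingEnd ℂ) (c i) * (c i' * ⟪a i, a i'⟫)).re| ≤ (K1:ℝ)^2 * (1/2)^j := by
      calc |∑ i : Fin K1, ∑ i' ∈ Finset.univ.erase i,
            ((starRingEnd ℂ) (c i) * (c i' * ⟪a i, a i'⟫)).re|
          ≤ ∑ i : Fin K1, |∑ i' ∈ Finset.univ.erase i,
            ((starRingEnd ℂ) (c i) * (c i' * ⟪a i, a i'⟫)).re| :=
            Finset.abs_sum_le_sum_abs _ _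
        _ ≤ ∑ i : Fin K1, ∑ i' ∈ Finset.univ.erase i,
            |((starRingEnd ℂ) (c i) * (c i' * ⟪a i, a i'⟫)).re| :=
            Finset.sum_le_sum fun i _ => Finset.abs_sum_le_sum_abs _ _
        _ ≤ ∑ i : Fin K1, ∑ _i' ∈ Finset.univ.erase i, ((1:ℝ)/2)^j :=
            Finset.sum_le_sum fun i _ => Finset.sum_le_sum fun i' hi' =>
              hreoff a i i' (hoff i i' (Finset.ne_of_mem_erase hi').symm).1
        _ ≤ ∑ _i : Fin K1, (K1:ℝ) * ((1:ℝ)/2)^j := by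
            refine Finset.sum_le_sum fun i _ => ?_
            rw [Finset.sum_const, nsmul_eq_mul]
            have hcard : ((Finset.univ.erase i).card : ℝ) ≤ (K1 : ℝ) := by
              have := Finset.card_erase_le (s := (Finset.univ : Finset (Fin K1))) (a := i)
              have h2 : (Finset.univ : Finset (Fin K1)).card = K1 := by
                rw [Finset.card_univ, Fintype.card_fin]
              exact_mod_cast le_trans this (le_of_eq h2)
            have : (0:ℝ) ≤ ((1:ℝ)/2)^j := by positivity
            exact mul_le_mul_of_nonneg_right hcard this
        _ = (K1:ℝ)^2 * (1/2)^j := by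
            rw [Finset.sum_const, Finset.card_univ, Fintype.card_fin, nsmul_eq_mul]
            ring
    have := (abs_le.mp ho).1
    linarith
  · -- graph-norm bound
    have h1 : A u = ∑ i : Fin K1, c i • A (w (b + i)) := by
      rw [hu]
      show A.toFun _ = _
      rw [map_sum]
      exact Finset.sum_congr rfl fun i _ => A.toFun.map_smul _ _
    have h2 : l • ((u : H)) = ∑ i : Fin K1, c i • (l • a i) := by
      rw [hucoe, Finset.smul_sum]
      exact Finset.sum_congr rfl fun i _ => smul_comm _ _ _
    have h3 : A u - l • (u : H) = ∑ i : Fin K1, c i • (A (w (b + i)) - l • a i) := by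
      rw [h1, h2, ← Finset.sum_sub_distrib]
      exact Finset.sum_congr rfl fun i _ => (smul_sub _ _ _).symm
    rw [h3]
    have hle : ∀ i : Fin K1, 1/((((b + (i:ℕ)) : ℕ):ℝ) + 1) ≤ 1/((j:ℝ)+1) := by
      intro i
      apply one_div_le_one_div_of_le (by positivity)
      have : (j:ℝ) ≤ ((b + (i:ℕ) : ℕ):ℝ) := Nat.cast_le.mpr (le_trans hjb (Nat.le_add_right _ _))
      push_cast at this ⊢
      linarith
    calc ‖∑ i : Fin K1, c i • (A (w (b + i)) - l • a i)‖
        ≤ ∑ i : Fin K1, ‖c i • (A (w (b + i)) - l • a i)‖ := norm_sum_le _ _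
      _ ≤ ∑ _i : Fin K1, 1/((j:ℝ)+1) := by
          refine Finset.sum_le_sum fun i _ => ?_
          rw [norm_smul]
          have hW : ‖A (w (b + i)) - l • a i‖ ≤ 1/((j:ℝ)+1) := by
            simp only [ha]
            exact (W2 (b + i)).trans (hle i)
          calc ‖c i‖ * ‖A (w (b + i)) - l • a i‖ ≤ 1 * (1/((j:ℝ)+1)) :=
              mul_le_mul (hcle i) hW (norm_nonneg _) zero_le_one
            _ = 1/((j:ℝ)+1) := one_mul _
      _ = (K1:ℝ) * (1/((j:ℝ)+1)) := by
          rw [Finset.sum_const, Finset.card_univ, Fintype.card_fin, nsmul_eq_mul]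
  · -- brk upper bound
    have hG1 : G ((u : H)) = ∑ i, c i • G (a i) := by
      rw [hucoe, map_sum]
      exact Finset.sum_congr rfl fun i _ => map_smul G _ _
    have h2 : ⟪G ((u : H)), (u : H)⟫ =
        ∑ i, ∑ i', (starRingEnd ℂ) (c i) * (c i' * ⟪G (a i), a i'⟫) := by
      rw [hG1, hucoe]
      exact hexp fun i => G (a i)
    have h3 : brkRe G u u = ∑ i, ∑ i',
        ((starRingEnd ℂ) (c i) * (c i' * ⟪G (a i), a i'⟫)).re := by
      rw [brkRe, brk, h2, Complex.re_sum]
      exact Finset.sum_congr rfl fun i _ => Complex.re_sum _ _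
    rw [h3]
    have hsplit : ∀ i : Fin K1,
        (∑ i', ((starRingEnd ℂ) (c i) * (c i' * ⟪G (a i), a i'⟫)).re) =
        ((starRingEnd ℂ) (c i) * (c i * ⟪G (a i), a i⟫)).re +
          ∑ i' ∈ Finset.univ.erase i,
            ((starRingEnd ℂ) (c i) * (c i' * ⟪G (a i), a i'⟫)).re := by
      intro i
      rw [← Finset.add_sum_erase _ _ (Finset.mem_univ i)]
    rw [Finset.sum_congr rfl fun i _ => hsplit i, Finset.sum_add_distrib]
    have hdiag : ∀ i : Fin K1,
        ((starRingEnd ℂ) (c i) * (c i * ⟪G (a i), a i⟫)).re ≤ 1/((j:ℝ)+1) := by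
      intro i
      have he : (starRingEnd ℂ) (c i) * (c i * ⟪G (a i), a i⟫) =
          ((‖c i‖^2 : ℝ) : ℂ) * ⟪G (a i), a i⟫ := by
        rw [← mul_assoc, mul_comm ((starRingEnd ℂ) (c i)) (c i), Complex.mul_conj]
        norm_cast
        simp [Complex.normSq_eq_norm_sq]
      rw [he, Complex.re_ofReal_mul]
      have hre : (⟪G (a i), a i⟫).re ≤ 1/((j:ℝ)+1) := by
        have hW := W3 (b + i)
        have hle : 1/((((b + (i:ℕ)) : ℕ):ℝ) + 1) ≤ 1/((j:ℝ)+1) := by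
          apply one_div_le_one_div_of_le (by positivity)
          have : (j:ℝ) ≤ ((b + (i:ℕ) : ℕ):ℝ) :=
            Nat.cast_le.mpr (le_trans hjb (Nat.le_add_right _ _))
          push_cast at this ⊢
          linarith
        exact le_trans hW hle
      rcases le_or_gt (⟪G (a i), a i⟫).re 0 with hneg | hpos
      · exact le_trans (mul_nonpos_of_nonneg_of_nonpos (sq_nonneg _) hneg) (by positivity)
      · have hsq : ‖c i‖^2 ≤ 1 := by
          have hcc := hcle i
          nlinarith [norm_nonneg (c i)]
        calc ‖c i‖^2 * (⟪G (a i), a i⟫).re ≤ 1 * (⟪G (a i), a i⟫).re :=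
            mul_le_mul_of_nonneg_right hsq hpos.le
          _ ≤ 1/((j:ℝ)+1) := by rw [one_mul]; exact hre
    have hdsum : ∑ i : Fin K1, ((starRingEnd ℂ) (c i) * (c i * ⟪G (a i), a i⟫)).re ≤
        (K1:ℝ) * (1/((j:ℝ)+1)) := by
      calc ∑ i : Fin K1, ((starRingEnd ℂ) (c i) * (c i * ⟪G (a i), a i⟫)).re
          ≤ ∑ _i : Fin K1, 1/((j:ℝ)+1) := Finset.sum_le_sum fun i _ => hdiag i
        _ = (K1:ℝ) * (1/((j:ℝ)+1)) := by
            rw [Finset.sum_const, Finset.card_univ, Fintype.card_fin, nsmul_eq_mul]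
    have ho : ∑ i : Fin K1, ∑ i' ∈ Finset.univ.erase i,
        ((starRingEnd ℂ) (c i) * (c i' * ⟪G (a i), a i'⟫)).re ≤ (K1:ℝ)^2 * (1/2)^j := by
      calc ∑ i : Fin K1, ∑ i' ∈ Finset.univ.erase i,
            ((starRingEnd ℂ) (c i) * (c i' * ⟪G (a i), a i'⟫)).re
          ≤ ∑ i : Fin K1, ∑ i' ∈ Finset.univ.erase i, ((1:ℝ)/2)^j := by
            refine Finset.sum_le_sum fun i _ => Finset.sum_le_sum fun i' hi' => ?_
            have := hreoff (fun i => G (a i)) i i'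
              (hoff i i' (Finset.ne_of_mem_erase hi').symm).2
            exact (abs_le.mp this).2
        _ ≤ ∑ _i : Fin K1, (K1:ℝ) * ((1:ℝ)/2)^j := by
            refine Finset.sum_le_sum fun i _ => ?_
            rw [Finset.sum_const, nsmul_eq_mul]
            have hcard : ((Finset.univ.erase i).card : ℝ) ≤ (K1 : ℝ) := by
              have h' := Finset.card_erase_le (s := (Finset.univ : Finset (Fin K1))) (a := i)
              have h2 : (Finset.univ : Finset (Fin K1)).card = K1 := by
                rw [Finset.card_univ, Fintype.card_fin]
              exact_mod_cast le_trans h' (le_of_eq h2)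
            have : (0:ℝ) ≤ ((1:ℝ)/2)^j := by positivity
            exact mul_le_mul_of_nonneg_right hcard this
        _ = (K1:ℝ)^2 * (1/2)^j := by
            rw [Finset.sum_const, Finset.card_univ, Fintype.card_fin, nsmul_eq_mul]
            ring
    linarith

set_option maxHeartbeats 1000000 in
/-- Direction (i) ⇒ (v). -/
theorem dir2 [CompleteSpace H] (G : H →L[ℂ] H) (hG : IsSelfAdjoint G)
    (A : H →ₗ.[ℂ] H) (l : ℂ) (h : sigmaPiPlusAt G A l)
    (x : ℕ → A.domain) (hweak : WeakNullSeq fun n => (x n : H))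
    (hx : IsApproxSeq A l x) : 0 < atTop.liminf fun n => brkRe G (x n) (x n) := by
  classical
  obtain ⟨-, M, hMfc, hMcond⟩ := h
  obtain ⟨hnorm, htend⟩ := hx
  by_contra hlim
  push_neg at hlim
  have hsym : ∀ p q : H, ⟪G p, q⟫ = ⟪p, G q⟫ := fun p q => hG.isSymmetric p q
  -- extraction of an almost-orthogonal subsequence
  set P : ℕ × ℕ → Prop := fun p => ‖A (x p.2) - l • ((x p.2 : H))‖ < 1 / (p.1 + 1) ∧
    brkRe G (x p.2) (x p.2) < 1 / (p.1 + 1) with hPdef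
  set r : ℕ × ℕ → ℕ × ℕ → Prop := fun p q => p.1 < q.1 ∧
      ‖⟪(x p.2 : H), (x q.2 : H)⟫‖ < (1/2 : ℝ) ^ q.1 ∧
      ‖⟪G ((x p.2 : H)), (x q.2 : H)⟫‖ < (1/2 : ℝ) ^ q.1 with hrdef
  have key : ∀ s : Finset (ℕ × ℕ), (∀ p ∈ s, P p) → ∃ y, P y ∧ ∀ p ∈ s, r p y := by
    intro s _
    set q : ℕ := (s.sup Prod.fst) + 1 with hq
    have hbd : Filter.IsCoboundedUnder (· ≥ ·) atTop (fun n => brkRe G (x n) (x n)) :=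
      Filter.IsBoundedUnder.isCoboundedUnder_ge
        (Filter.isBoundedUnder_of ⟨‖G‖, fun n => (abs_le.mp (brkRe_bdd G x hnorm n)).2⟩)
    have hfreq : ∃ᶠ n in atTop, brkRe G (x n) (x n) < 1 / (q + 1) :=
      frequently_lt_of_liminf_lt hbd (lt_of_le_of_lt hlim (by positivity))
    have hev1 : ∀ᶠ n in atTop, ‖A (x n) - l • ((x n : H))‖ < 1 / (q + 1) := by
      have h' := htend.norm
      simp only [norm_zero] at h'
      exact h'.eventually_lt_const (by positivity)
    have hev2 : ∀ᶠ n in atTop, ∀ p ∈ s,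
        ‖⟪(x p.2 : H), (x n : H)⟫‖ < (1/2 : ℝ) ^ q ∧
        ‖⟪G ((x p.2 : H)), (x n : H)⟫‖ < (1/2 : ℝ) ^ q := by
      rw [Finset.eventually_all]
      intro p _
      have h1 := hweak ((x p.2 : H))
      have h2 := hweak (G ((x p.2 : H)))
      rw [tendsto_zero_iff_norm_tendsto_zero] at h1 h2
      exact (h1.eventually_lt_const (by positivity)).and
        (h2.eventually_lt_const (by positivity))
    obtain ⟨n, h1, h2, h3⟩ := (hfreq.and_eventually (hev1.and hev2)).exists
    exact ⟨(q, n), ⟨h2, h1⟩, fun p hp =>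
      ⟨lt_of_le_of_lt (Finset.le_sup hp) (Nat.lt_succ_self _), (h3 p hp).1, (h3 p hp).2⟩⟩
  obtain ⟨f, hPf, hrf⟩ := exists_seq_of_forall_finset_exists P r key
  set w : ℕ → A.domain := fun n => x ((f n).2) with hwdef
  have hmono : StrictMono fun n => (f n).1 := fun m n h => (hrf m n h).1
  have hge : ∀ n, n ≤ (f n).1 := fun n => hmono.le_apply
  have hfrac : ∀ n : ℕ, 1 / (((f n).1 : ℝ) + 1) ≤ 1 / ((n : ℝ) + 1) := by
    intro n
    apply one_div_le_one_div_of_le (by positivity)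
    have hcast : (n : ℝ) ≤ ((f n).1 : ℝ) := Nat.cast_le.mpr (hge n)
    linarith
  have hpowle : ∀ n : ℕ, ((1:ℝ)/2) ^ (f n).1 ≤ (1/2) ^ n := fun n =>
    pow_le_pow_of_le_one (by norm_num) (by norm_num) (hge n)
  have W1 : ∀ n, ‖(w n : H)‖ = 1 := fun n => hnorm _
  have W2 : ∀ n, ‖A (w n) - l • ((w n : H))‖ ≤ 1 / ((n:ℝ)+1) := fun n =>
    (hPf n).1.le.trans (hfrac n)
  have W3 : ∀ n, brkRe G (w n) (w n) ≤ 1 / ((n:ℝ)+1) := fun n =>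
    (hPf n).2.le.trans (hfrac n)
  have W4 : ∀ m n, m < n → ‖⟪(w m : H), (w n : H)⟫‖ ≤ (1/2:ℝ)^n ∧
      ‖⟪G ((w m : H)), (w n : H)⟫‖ ≤ (1/2:ℝ)^n := fun m n h =>
    ⟨(hrf m n h).2.1.le.trans (hpowle n), (hrf m n h).2.2.le.trans (hpowle n)⟩
  haveI : FiniteDimensional ℂ (H ⧸ M) := hMfc
  set K1 : ℝ := ((Module.finrank ℂ (H ⧸ M) + 1 : ℕ) : ℝ) with hK1R
  have hK1pos : (0:ℝ) < K1 := by rw [hK1R]; positivity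
  have hstep := block_step G hsym A l M w W1 W2 W3 W4
  choose u hu1 hu2 hu3 hu4 using hstep
  -- tail where the norm is bounded below
  have hεt : Tendsto (fun j : ℕ => K1^2 * (1/2:ℝ)^j) atTop (𝓝 0) := by
    have h' := tendsto_pow_atTop_nhds_zero_of_lt_one
      (by norm_num : (0:ℝ) ≤ 1/2) (by norm_num : (1/2:ℝ) < 1)
    simpa using h'.const_mul (K1^2)
  obtain ⟨J0, hJ0⟩ : ∃ J0 : ℕ, ∀ j ≥ J0, K1^2 * (1/2:ℝ)^j ≤ 1/2 := by
    have h' := hεt.eventually_le_const (by norm_num : (0:ℝ) < 1/2)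
    exact eventually_atTop.mp h'
  have hun : ∀ j : ℕ, (1:ℝ)/2 ≤ ‖(u (j + J0) : H)‖ := by
    intro j
    have h2 := hu2 (j + J0)
    have h3 := hJ0 (j + J0) (by omega)
    rw [← hK1R] at h2
    nlinarith [norm_nonneg ((u (j + J0) : H))]
  have hupos : ∀ j : ℕ, (0:ℝ) < ‖(u (j + J0) : H)‖ := fun j =>
    lt_of_lt_of_le (by norm_num) (hun j)
  have huinv : ∀ j : ℕ, ‖(u (j + J0) : H)‖⁻¹ ≤ 2 := by
    intro j
    rw [inv_le_comm₀ (hupos j) (by norm_num)]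
    have := hun j
    linarith
  set v : ℕ → A.domain := fun j => (((‖(u (j + J0) : H)‖ : ℝ) : ℂ))⁻¹ • u (j + J0) with hv
  have hvcoe : ∀ j, (v j : H) = (((‖(u (j + J0) : H)‖ : ℝ) : ℂ))⁻¹ • ((u (j + J0) : H)) :=
    fun j => rfl
  have hvmem : ∀ j, (v j : H) ∈ M := fun j => M.smul_mem _ (hu1 _)
  have hnormc : ∀ j, ‖(((‖(u (j + J0) : H)‖ : ℝ) : ℂ))⁻¹‖ = ‖(u (j + J0) : H)‖⁻¹ := by
    intro j
    rw [norm_inv, Complex.norm_real, Real.norm_eq_abs, abs_of_nonneg (norm_nonneg _)]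
  have hvnorm : ∀ j, ‖(v j : H)‖ = 1 := by
    intro j
    rw [hvcoe, norm_smul, hnormc, inv_mul_cancel₀ (ne_of_gt (hupos j))]
  have hvA : ∀ j, A (v j) - l • ((v j : H)) =
      (((‖(u (j + J0) : H)‖ : ℝ) : ℂ))⁻¹ • (A (u (j + J0)) - l • ((u (j + J0) : H))) := by
    intro j
    have h1 : A (v j) = (((‖(u (j + J0) : H)‖ : ℝ) : ℂ))⁻¹ • A (u (j + J0)) := by
      show A.toFun _ = _
      rw [hv]
      exact A.toFun.map_smul _ _
    rw [h1, hvcoe, smul_comm l, smul_sub]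
  have hfrac2 : ∀ j : ℕ, 1/(((j:ℝ) + (J0:ℝ)) + 1) ≤ 1/((j:ℝ)+1) := by
    intro j
    apply one_div_le_one_div_of_le (by positivity)
    have : (0:ℝ) ≤ (J0:ℝ) := Nat.cast_nonneg _
    linarith
  have hvAnorm : ∀ j, ‖A (v j) - l • ((v j : H))‖ ≤ 2 * (K1 * (1/((j:ℝ)+1))) := by
    intro j
    rw [hvA, norm_smul, hnormc]
    have h3 := hu3 (j + J0)
    rw [← hK1R] at h3
    have e1 : 1/((((j + J0 : ℕ)):ℝ) + 1) ≤ 1/((j:ℝ)+1) := by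
      push_cast
      exact hfrac2 j
    have h3' : ‖A (u (j + J0)) - l • ((u (j + J0) : H))‖ ≤ K1 * (1/((j:ℝ)+1)) :=
      h3.trans (mul_le_mul_of_nonneg_left e1 hK1pos.le)
    exact mul_le_mul (huinv j) h3' (norm_nonneg _) (by norm_num)
  have hvtend : Tendsto (fun j => A (v j) - l • ((v j : H))) atTop (𝓝 0) := by
    rw [tendsto_zero_iff_norm_tendsto_zero]
    apply squeeze_zero (fun j => norm_nonneg _) hvAnorm
    have h' := one_div_nat_tendsto.const_mul K1
    have h'' := (h'.const_mul (2:ℝ))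
    simpa using h''
  have hposM := hMcond v hvmem ⟨hvnorm, hvtend⟩
  -- upper bound for the bracket of v
  set g := fun j : ℕ => (4:ℝ) * (K1 * (1/((j:ℝ)+1)) + K1^2 * (1/2:ℝ)^j) with hg
  have hg0 : ∀ j, 0 ≤ g j := by intro j; rw [hg]; positivity
  have hbrkv : ∀ j, brkRe G (v j) (v j) ≤ g j := by
    intro j
    have hscal : brkRe G (v j) (v j) = (‖(u (j + J0) : H)‖⁻¹)^2 * brkRe G (u (j + J0)) (u (j + J0)) := by
      rw [brkRe, brkRe, brk, brk, hvcoe, _root_.map_smul, inner_smul_left, inner_smul_right,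
        ← mul_assoc, Complex.conj_inv, Complex.conj_ofReal, ← Complex.ofReal_inv,
        ← Complex.ofReal_mul, Complex.re_ofReal_mul]
      ring_nf
    rw [hscal]
    have h4 := hu4 (j + J0)
    rw [← hK1R] at h4
    have hB : K1 * (1/((((j + J0 : ℕ)):ℝ) + 1)) + K1^2 * (1/2:ℝ)^(j + J0) ≤
        K1 * (1/((j:ℝ)+1)) + K1^2 * (1/2:ℝ)^j := by
      have e1 : 1/((((j + J0 : ℕ)):ℝ) + 1) ≤ 1/((j:ℝ)+1) := by
        push_cast
        exact hfrac2 j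
      have e2 : (1/2:ℝ)^(j + J0) ≤ (1/2:ℝ)^j :=
        pow_le_pow_of_le_one (by norm_num) (by norm_num) (by omega)
      have hK1' : (0:ℝ) ≤ K1 := hK1pos.le
      have hK2' : (0:ℝ) ≤ K1^2 := sq_nonneg _
      nlinarith
    have hinv2 : (‖(u (j + J0) : H)‖⁻¹)^2 ≤ 4 := by
      have := huinv j
      have h0 : (0:ℝ) ≤ ‖(u (j + J0) : H)‖⁻¹ := inv_nonneg.mpr (norm_nonneg _)
      nlinarith
    have hBnn : 0 ≤ K1 * (1/((j:ℝ)+1)) + K1^2 * (1/2:ℝ)^j := by positivity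
    rcases le_or_gt (brkRe G (u (j + J0)) (u (j + J0))) 0 with hneg | hpos
    · have : (‖(u (j + J0) : H)‖⁻¹)^2 * brkRe G (u (j + J0)) (u (j + J0)) ≤ 0 :=
        mul_nonpos_of_nonneg_of_nonpos (sq_nonneg _) hneg
      refine this.trans ?_
      rw [hg]
      positivity
    · have hb2 : brkRe G (u (j + J0)) (u (j + J0)) ≤
          K1 * (1/((j:ℝ)+1)) + K1^2 * (1/2:ℝ)^j := h4.trans hB
      rw [hg]
      nlinarith
  have hgt : Tendsto g atTop (𝓝 0) := by
    rw [hg]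
    have h1 := one_div_nat_tendsto.const_mul K1
    have h2 := (tendsto_pow_atTop_nhds_zero_of_lt_one
      (by norm_num : (0:ℝ) ≤ 1/2) (by norm_num : (1/2:ℝ) < 1)).const_mul (K1^2)
    have h3 := (h1.add h2).const_mul (4:ℝ)
    simpa using h3
  have hfin : atTop.liminf (fun j => brkRe G (v j) (v j)) ≤ atTop.liminf g := by
    have hbdd : Filter.IsBoundedUnder (· ≥ ·) atTop (fun j => brkRe G (v j) (v j)) :=
      Filter.isBoundedUnder_of ⟨-‖G‖, fun j => (abs_le.mp (brkRe_bdd G v hvnorm j)).1⟩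
    have hcob : Filter.IsCoboundedUnder (· ≥ ·) atTop g :=
      Filter.IsBoundedUnder.isCoboundedUnder_ge
        (Filter.isBoundedUnder_of ⟨4 * (K1 + K1^2), fun j => by
          rw [hg]
          have e1 : K1 * (1/((j:ℝ)+1)) ≤ K1 := by
            have : 1/((j:ℝ)+1) ≤ 1 := by
              rw [div_le_one (by positivity)]
              linarith [Nat.cast_nonneg (α := ℝ) j]
            nlinarith [hK1pos.le]
          have e2 : K1^2 * (1/2:ℝ)^j ≤ K1^2 := by
            have h2 : (1/2:ℝ)^j ≤ 1 :=
              pow_le_one₀ (by norm_num) (by norm_num)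
            nlinarith [sq_nonneg K1]
          linarith⟩)
    exact Filter.liminf_le_liminf (Filter.Eventually.of_forall hbrkv) hbdd hcob
  rw [hgt.liminf_eq] at hfin
  linarith


theorem brkRe_neg (G : H →L[ℂ] H) (x y : H) : brkRe (-G) x y = - brkRe G x y := by
  simp [brkRe, brk, inner_neg_left]

theorem piMinusCond_iff (G : H →L[ℂ] H) (A : H →ₗ.[ℂ] H) (l : ℂ) (M : Submodule ℂ H) :
    PiMinusCond G A l M ↔ PiPlusCond (-G) A l M := by
  unfold PiMinusCond PiPlusCond
  refine forall_congr' fun x => imp_congr_right fun _ => imp_congr_right fun _ => ?_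
  have he : (fun n => brkRe (-G) (x n) (x n)) = fun n => -(brkRe G (x n) (x n)) :=
    funext fun n => brkRe_neg _ _ _
  rw [he, real_liminf_neg]
  exact ⟨fun h => neg_pos.mpr h, fun h => neg_pos.mp h⟩

theorem sigmaPiMinusAt_iff (G : H →L[ℂ] H) (A : H →ₗ.[ℂ] H) (l : ℂ) :
    sigmaPiMinusAt G A l ↔ sigmaPiPlusAt (-G) A l := by
  unfold sigmaPiMinusAt sigmaPiPlusAt
  exact and_congr_right fun _ => exists_congr fun M =>
    and_congr_right fun _ => piMinusCond_iff G A l M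

/-- Characterizations of spectral points of type `π₊` and `π₋`
(Theorem 3.3 (i) ⇔ (iv) ⇔ (v)). -/
theorem statement_0 [CompleteSpace H] (G : H →L[ℂ] H) (hG : IsSelfAdjoint G)
    (A : H →ₗ.[ℂ] H) (hAc : A.IsClosed) (hAd : Dense (A.domain : Set H))
    (l : ℂ) (hl : l ∈ sigmaAp A) :
    (sigmaPiPlusAt G A l ↔
      ∃ M : Submodule ℂ H, IsClosed (M : Set H) ∧ FinCodim M ∧ PiPlusCond G A l M) ∧
    (sigmaPiPlusAt G A l ↔
      ∀ x : ℕ → A.domain, WeakNullSeq (fun n => (x n : H)) → IsApproxSeq A l x →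
        0 < atTop.liminf (fun n => brkRe G (x n) (x n))) ∧
    (sigmaPiMinusAt G A l ↔
      ∃ M : Submodule ℂ H, IsClosed (M : Set H) ∧ FinCodim M ∧ PiMinusCond G A l M) ∧
    (sigmaPiMinusAt G A l ↔
      ∀ x : ℕ → A.domain, WeakNullSeq (fun n => (x n : H)) → IsApproxSeq A l x →
        atTop.limsup (fun n => brkRe G (x n) (x n)) < 0) := by
  have hGn : IsSelfAdjoint (-G) := hG.neg
  have p1 : sigmaPiPlusAt G A l ↔
      ∃ M : Submodule ℂ H, IsClosed (M : Set H) ∧ FinCodim M ∧ PiPlusCond G A l M :=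
    ⟨fun h => dir3 G A l (dir2 G hG A l h),
     fun ⟨M, _, hfc, hc⟩ => ⟨hl, M, hfc, hc⟩⟩
  have p2 : sigmaPiPlusAt G A l ↔
      ∀ x : ℕ → A.domain, WeakNullSeq (fun n => (x n : H)) → IsApproxSeq A l x →
        0 < atTop.liminf (fun n => brkRe G (x n) (x n)) :=
    ⟨fun h x hw hx => dir2 G hG A l h x hw hx,
     fun h5 => by obtain ⟨M, _, hfc, hc⟩ := dir3 G A l h5; exact ⟨hl, M, hfc, hc⟩⟩
  have q1 : sigmaPiPlusAt (-G) A l ↔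
      ∃ M : Submodule ℂ H, IsClosed (M : Set H) ∧ FinCodim M ∧ PiPlusCond (-G) A l M :=
    ⟨fun h => dir3 (-G) A l (dir2 (-G) hGn A l h),
     fun ⟨M, _, hfc, hc⟩ => ⟨hl, M, hfc, hc⟩⟩
  have q2 : sigmaPiPlusAt (-G) A l ↔
      ∀ x : ℕ → A.domain, WeakNullSeq (fun n => (x n : H)) → IsApproxSeq A l x →
        0 < atTop.liminf (fun n => brkRe (-G) (x n) (x n)) :=
    ⟨fun h x hw hx => dir2 (-G) hGn A l h x hw hx,
     fun h5 => by obtain ⟨M, _, hfc, hc⟩ := dir3 (-G) A l h5; exact ⟨hl, M, hfc, hc⟩⟩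
  refine ⟨p1, p2, ?_, ?_⟩
  · rw [sigmaPiMinusAt_iff, q1]
    exact exists_congr fun M => and_congr_right fun _ => and_congr_right fun _ =>
      (piMinusCond_iff G A l M).symm
  · rw [sigmaPiMinusAt_iff, q2]
    refine forall_congr' fun x => imp_congr_right fun _ => imp_congr_right fun _ => ?_
    have he : (fun n => brkRe (-G) (x n) (x n)) = fun n => -(brkRe G (x n) (x n)) :=
      funext fun n => brkRe_neg _ _ _
    rw [he, real_liminf_neg]
    exact ⟨fun h => neg_pos.mp h, fun h => neg_pos.mpr h⟩

end Paper
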